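/- arXiv:2605.07259 — 2 statements merged into one kernel-verified Lean document; each statement's English description precedes it below -/
import Mathlib

section
/- Transport of evidenced entailments along a realizable tape map: let κ : (R,Σ) → (R′,Σ′) be measurable and realizable with translation tr_κ : C → C, meaning (e ·_{R′} c) ∘ κ = tr_κ(e) ·_R c for all e, c ∈ C. If φ′, ψ′ : C → Ω_{R′} and e ∈ C satisfy φ′(c) ≤ ⟨◇a ← (e ·_{R′} c)⟩ ψ′(a) pointwise for all c (entailment in the R′-tape evidenced frame), then (φ′(c)) ∘ κ ≤ ⟨◇a ← (tr_κ(e) ·_R c)⟩ (ψ′(a) ∘ κ) pointwise for all c (entailment in the R-tape evidenced frame witnessed by tr_κ(e)). -/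
/-- The tape modality over a tape space `S`. -/
def after {S X : Type*} (m : S → Option X) (ψ : X → S → ℝ) : S → ℝ :=
  fun s => (m s).elim 0 (fun x => ψ x s)

theorem tapemap_entailment_transport
    {R R' : Type*} [MeasurableSpace R] [MeasurableSpace R']
    (κ : R → R') (hκ : Measurable κ)
    (C : Type*)
    (appR' : C → C → R' → Option C) (appR : C → C → R → Option C)
    (trκ : C → C)
    -- realizability of κ: the translation tr_κ matches semantic reindexing
    (hreal : ∀ e c : C, ∀ r : R, appR' e c (κ r) = appR (trκ e) c r)
    (φ' ψ' : C → R' → ℝ) (e : C)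
    -- entailment in the R'-tape evidenced frame
    (hent : ∀ c : C, ∀ r' : R', φ' c r' ≤ after (appR' e c) ψ' r') :
    -- entailment in the R-tape evidenced frame, witnessed by tr_κ(e)
    ∀ c : C, ∀ r : R,
      φ' c (κ r) ≤ after (appR (trκ e) c) (fun a r => ψ' a (κ r)) r := by
  intro c r
  have h := hent c (κ r)
  simpa [after, hreal e c r] using h
end

section
/- Law of split sequencing: with R = {0,1}^ℕ and the fair coin measure μ, for measurable m : R → X_⊥ and f : X → (R → Y_⊥) with each f(x) measurable, define (m >>=_split f)(r) := ⊥ if m(r_even) = ⊥, else f(m(r_even))(r_odd). Then for all measurable B ⊆ Y_⊥, the pushforward law satisfies law(m >>=_split f)(B) = ∫_{X_⊥} law(f(x))(B) d(law(m))(x), where law(⊥)(B) := 1_{⊥ ∈ B} for the ⊥ branch; i.e., split sequencing realizes composition of laws by fresh independent randomness. -/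
open MeasureTheory
open scoped Classical

/-- The fair-coin product measure on bit streams, characterized on cylinders. -/
def IsFairCoin (μ : Measure (ℕ → Bool)) : Prop :=
  IsProbabilityMeasure μ ∧
    ∀ (n : ℕ) (w : Fin n → Bool),
      μ {r : ℕ → Bool | ∀ i : Fin n, r i = w i} = (1/2 : ENNReal) ^ (n : ℕ)

/-- Split sequencing: run `m` on the even sub-tape and the continuation on the odd sub-tape. -/
def splitBind {X Y : Type*} (m : (ℕ → Bool) → Option X)
    (f : X → (ℕ → Bool) → Option Y) : (ℕ → Bool) → Option Y :=
  fun r => (m (fun n => r (2 * n))).elim none (fun x => f x (fun n => r (2 * n + 1)))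

namespace SplitSeqAux
open Set MeasurableSpace

/-- A cylinder set fixing the first `n` coordinates. -/
def cyl (n : ℕ) (w : Fin n → Bool) : Set (ℕ → Bool) := {r | ∀ i : Fin n, r i = w i}

def cylSets : Set (Set (ℕ → Bool)) := {s | ∃ n, ∃ w : Fin n → Bool, s = cyl n w}

lemma measurableSet_cyl (n : ℕ) (w : Fin n → Bool) : MeasurableSet (cyl n w) := by
  have : cyl n w = ⋂ i : Fin n, {r : ℕ → Bool | r (i : ℕ) = w i} := by
    ext r; simp [cyl]
  rw [this]
  exact MeasurableSet.iInter fun i =>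
    (measurableSet_singleton (w i)).preimage (measurable_pi_apply (i : ℕ))

lemma coord_mem (i : ℕ) (b : Bool) :
    MeasurableSet[generateFrom cylSets] {r : ℕ → Bool | r i = b} := by
  have : {r : ℕ → Bool | r i = b} =
      ⋃ (w : Fin (i+1) → Bool) (_ : w (Fin.last i) = b), cyl (i+1) w := by
    ext r
    constructor
    · intro hr
      refine mem_iUnion.2 ⟨fun j => r j, mem_iUnion.2 ⟨?_, fun j => rfl⟩⟩
      simpa using hr
    · rintro h
      rcases mem_iUnion.1 h with ⟨w, hw⟩
      rcases mem_iUnion.1 hw with ⟨hwb, hr⟩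
      have := hr (Fin.last i)
      simp only [Fin.val_last] at this
      simp [this, hwb]
  rw [this]
  exact MeasurableSet.iUnion fun w => MeasurableSet.iUnion fun _ =>
    measurableSet_generateFrom ⟨_, _, rfl⟩

lemma pi_eq_generateFrom :
    (inferInstance : MeasurableSpace (ℕ → Bool)) = generateFrom cylSets := by
  apply le_antisymm
  · refine iSup_le fun i => ?_
    rw [← measurable_iff_comap_le]
    letI : MeasurableSpace (ℕ → Bool) := generateFrom cylSets
    exact measurable_to_countable' (fun b => coord_mem i b)
  · exact generateFrom_le fun s ⟨n, w, hs⟩ => hs ▸ measurableSet_cyl n w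

lemma isPiSystem_cylSets : IsPiSystem cylSets := by
  rintro s ⟨n, w, rfl⟩ t ⟨n', v, rfl⟩ hne
  rcases le_total n n' with h | h
  · rcases hne with ⟨r, hr1, hr2⟩
    refine ⟨n', v, ?_⟩
    apply Subset.antisymm (inter_subset_right)
    intro r' hr'
    refine ⟨fun i => ?_, hr'⟩
    have h1 := hr1 i
    have h2 := hr2 ⟨i, lt_of_lt_of_le i.2 h⟩
    have h3 := hr' ⟨i, lt_of_lt_of_le i.2 h⟩
    simp only at h1 h2 h3 ⊢
    rw [h3, ← h2, h1]
  · rcases hne with ⟨r, hr1, hr2⟩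
    refine ⟨n, w, ?_⟩
    apply Subset.antisymm (inter_subset_left)
    intro r' hr'
    refine ⟨hr', fun i => ?_⟩
    have h1 := hr2 i
    have h2 := hr1 ⟨i, lt_of_lt_of_le i.2 h⟩
    have h3 := hr' ⟨i, lt_of_lt_of_le i.2 h⟩
    simp only at h1 h2 h3 ⊢
    rw [h3, ← h2, h1]

lemma isCountablySpanning_cylSets : IsCountablySpanning cylSets := by
  refine ⟨fun _ => cyl 0 Fin.elim0, fun _ => ⟨0, Fin.elim0, rfl⟩, ?_⟩
  simp [cyl, eq_univ_iff_forall]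


lemma measurableSet_constraint (S : Finset ℕ) (u : ℕ → Bool) :
    MeasurableSet {r : ℕ → Bool | ∀ i ∈ S, r i = u i} := by
  have : {r : ℕ → Bool | ∀ i ∈ S, r i = u i} = ⋂ i ∈ S, {r : ℕ → Bool | r i = u i} := by
    ext r; simp
  rw [this]
  exact MeasurableSet.biInter S.countable_toSet fun i _ =>
    (measurableSet_singleton (u i)).preimage (measurable_pi_apply i)

lemma measure_constraint (μ : Measure (ℕ → Bool))
    (hμ2 : ∀ (n : ℕ) (w : Fin n → Bool),
      μ {r : ℕ → Bool | ∀ i : Fin n, r i = w i} = (1/2 : ENNReal) ^ n) :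
    ∀ (d N : ℕ) (S : Finset ℕ), S ⊆ Finset.range N → N - S.card = d →
      ∀ u : ℕ → Bool, μ {r : ℕ → Bool | ∀ i ∈ S, r i = u i} = (1/2 : ENNReal) ^ S.card := by
  intro d
  induction d with
  | zero =>
    intro N S hS hd u
    have hcard : S.card ≤ N := by
      simpa [Finset.card_range] using Finset.card_le_card hS
    have hcard2 : (Finset.range N).card ≤ S.card := by
      simp [Finset.card_range]; omega
    have hSe : S = Finset.range N := Finset.eq_of_subset_of_card_le hS hcard2
    rw [hSe]
    have hset : {r : ℕ → Bool | ∀ i ∈ Finset.range N, r i = u i}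
        = {r : ℕ → Bool | ∀ i : Fin N, r i = (fun i : Fin N => u i) i} := by
      ext r; simp only [Finset.mem_range, mem_setOf_eq]
      exact ⟨fun h i => h i i.2, fun h i hi => h ⟨i, hi⟩⟩
    rw [hset, hμ2 N, Finset.card_range]
  | succ d ih =>
    intro N S hS hd u
    have hcard : S.card ≤ N := by
      simpa [Finset.card_range] using Finset.card_le_card hS
    have hne : (Finset.range N \ S).Nonempty := by
      rw [← Finset.card_pos, Finset.card_sdiff_of_subset hS, Finset.card_range]; omega
    obtain ⟨j, hj⟩ := hne
    have hjS : j ∉ S := (Finset.mem_sdiff.1 hj).2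
    have hsplit : {r : ℕ → Bool | ∀ i ∈ S, r i = u i}
        = {r : ℕ → Bool | ∀ i ∈ insert j S, r i = Function.update u j true i}
          ∪ {r : ℕ → Bool | ∀ i ∈ insert j S, r i = Function.update u j false i} := by
      ext r
      simp only [mem_setOf_eq, mem_union, Finset.mem_insert]
      constructor
      · intro h
        cases hb : r j with
        | true =>
          left; rintro i (rfl | hi)
          · simp [hb]
          · rw [Function.update_of_ne (by rintro rfl; exact hjS hi)]; exact h i hi
        | false =>
          right; rintro i (rfl | hi)
          · simp [hb]
          · rw [Function.update_of_ne (by rintro rfl; exact hjS hi)]; exact h i hi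
      · rintro (h | h) i hi <;>
        · have hh := h i (Or.inr hi)
          rwa [Function.update_of_ne (by rintro rfl; exact hjS hi)] at hh
    have hdisj : Disjoint {r : ℕ → Bool | ∀ i ∈ insert j S, r i = Function.update u j true i}
        {r : ℕ → Bool | ∀ i ∈ insert j S, r i = Function.update u j false i} := by
      rw [Set.disjoint_left]
      intro r h1 h2
      have e1 := h1 j (Finset.mem_insert_self j S)
      have e2 := h2 j (Finset.mem_insert_self j S)
      simp at e1 e2
      rw [e1] at e2
      exact Bool.noConfusion e2
    have hins : (insert j S).card = S.card + 1 := Finset.card_insert_of_notMem hjS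
    have hsub : insert j S ⊆ Finset.range N :=
      Finset.insert_subset (Finset.mem_sdiff.1 hj).1 hS
    have h1 := ih N (insert j S) hsub (by omega) (Function.update u j true)
    have h2 := ih N (insert j S) hsub (by omega) (Function.update u j false)
    rw [hsplit, measure_union hdisj (measurableSet_constraint _ _), h1, h2, hins,
      pow_succ, ← mul_add, ENNReal.add_halves, mul_one]


noncomputable def q (r : ℕ → Bool) : (ℕ → Bool) × (ℕ → Bool) :=
  (fun n => r (2 * n), fun n => r (2 * n + 1))

lemma measurable_q : Measurable q := by
  refine Measurable.prod ?_ ?_ <;>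
    exact measurable_pi_lambda _ fun n => measurable_pi_apply _

lemma map_q_eq_prod (μ : Measure (ℕ → Bool)) [IsProbabilityMeasure μ]
    (hμ2 : ∀ (n : ℕ) (w : Fin n → Bool),
      μ {r : ℕ → Bool | ∀ i : Fin n, r i = w i} = (1/2 : ENNReal) ^ n) :
    Measure.map q μ = μ.prod μ := by
  have hgen := generateFrom_prod_eq isCountablySpanning_cylSets isCountablySpanning_cylSets
  have hh : (inferInstance : MeasurableSpace ((ℕ → Bool) × (ℕ → Bool)))
      = generateFrom (image2 (· ×ˢ ·) cylSets cylSets) := by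
    rw [← hgen]
    rw [show (MeasurableSpace.pi : MeasurableSpace (ℕ → Bool)) = generateFrom cylSets
      from pi_eq_generateFrom]
  haveI : IsProbabilityMeasure (Measure.map q μ) :=
    Measure.isProbabilityMeasure_map measurable_q.aemeasurable
  refine ext_of_generate_finite _ hh (isPiSystem_cylSets.prod isPiSystem_cylSets) ?_ ?_
  · rintro _ ⟨s, ⟨n, w, rfl⟩, t, ⟨n', v, rfl⟩, rfl⟩
    rw [Measure.map_apply measurable_q ((measurableSet_cyl n w).prod (measurableSet_cyl n' v)),
      Measure.prod_prod]
    have hcw : μ (cyl n w) = (1/2 : ENNReal) ^ n := hμ2 n w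
    have hcv : μ (cyl n' v) = (1/2 : ENNReal) ^ n' := hμ2 n' v
    rw [hcw, hcv]
    -- compute the preimage as a constraint set
    set S : Finset ℕ := (Finset.range n).image (fun i => 2 * i)
        ∪ (Finset.range n').image (fun i => 2 * i + 1) with hS
    set u : ℕ → Bool := fun k =>
      if k % 2 = 0 then (if h : k / 2 < n then w ⟨k / 2, h⟩ else true)
      else (if h : k / 2 < n' then v ⟨k / 2, h⟩ else true) with hu
    have hue : ∀ (a : ℕ) (h : a < n), u (2 * a) = w ⟨a, h⟩ := by
      intro a h
      have h2 : (2 * a) % 2 = 0 := by omega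
      have h3 : (2 * a) / 2 = a := by omega
      simp [hu, h2, h3, h]
    have huo : ∀ (a : ℕ) (h : a < n'), u (2 * a + 1) = v ⟨a, h⟩ := by
      intro a h
      have h2 : ¬ (2 * a + 1) % 2 = 0 := by omega
      have h3 : (2 * a + 1) / 2 = a := by omega
      simp [hu, h2, h3, h]
    have hpre : q ⁻¹' (cyl n w ×ˢ cyl n' v) = {r : ℕ → Bool | ∀ i ∈ S, r i = u i} := by
      ext r
      simp only [mem_preimage, mem_prod, q, cyl, mem_setOf_eq, hS, Finset.mem_union,
        Finset.mem_image, Finset.mem_range]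
      constructor
      · rintro ⟨h1, h2⟩ i (⟨a, ha, rfl⟩ | ⟨a, ha, rfl⟩)
        · rw [hue a ha]; exact h1 ⟨a, ha⟩
        · rw [huo a ha]; exact h2 ⟨a, ha⟩
      · intro h
        constructor
        · intro i
          have := h (2 * i) (Or.inl ⟨i, i.2, rfl⟩)
          rwa [hue i i.2] at this
        · intro i
          have := h (2 * i + 1) (Or.inr ⟨i, i.2, rfl⟩)
          rwa [huo i i.2] at this
    have hcardS : S.card = n + n' := by
      have hdisj2 : Disjoint ((Finset.range n).image fun i => 2 * i)
          ((Finset.range n').image fun i => 2 * i + 1) := by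
        rw [Finset.disjoint_left]
        intro x hx1 hx2
        rcases Finset.mem_image.1 hx1 with ⟨a, _, ha⟩
        rcases Finset.mem_image.1 hx2 with ⟨b, _, hb⟩
        
        omega
      have hinj1 : Function.Injective (fun i : ℕ => 2 * i) := by
        intro a b h
        have h' : 2 * a = 2 * b := h
        omega
      have hinj2 : Function.Injective (fun i : ℕ => 2 * i + 1) := by
        intro a b h
        have h' : 2 * a + 1 = 2 * b + 1 := h
        omega
      rw [hS, Finset.card_union_of_disjoint hdisj2, Finset.card_image_of_injective _ hinj1,
        Finset.card_image_of_injective _ hinj2, Finset.card_range, Finset.card_range]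
    have hsub : S ⊆ Finset.range (2 * n + 2 * n' + 2) := by
      intro x hx
      rw [hS] at hx
      rcases Finset.mem_union.1 hx with hx | hx <;>
        · rcases Finset.mem_image.1 hx with ⟨a, ha, rfl⟩
          rw [Finset.mem_range] at ha ⊢
          omega
    rw [hpre, measure_constraint μ hμ2 _ _ S hsub rfl u, hcardS, pow_add]
  · simp


end SplitSeqAux

open Set in
theorem law_of_split_sequencing
    (X Y : Type*) [Countable X] [Countable Y]
    (μ : Measure (ℕ → Bool)) (hμ : IsFairCoin μ)
    (m : (ℕ → Bool) → Option X) (hm : @Measurable _ (Option X) _ ⊤ m)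
    (f : X → (ℕ → Bool) → Option Y) (hf : ∀ x, @Measurable _ (Option Y) _ ⊤ (f x))
    (B : Set (Option Y)) :
    μ (splitBind m f ⁻¹' B) =
      @MeasureTheory.lintegral (Option X) ⊤ (@Measure.map _ _ _ ⊤ m μ)
        (fun z => z.elim (if (none : Option Y) ∈ B then 1 else 0)
          (fun x => μ (f x ⁻¹' B))) := by
  classical
  obtain ⟨hprob, hcyl⟩ := hμ
  haveI := hprob
  letI mX : MeasurableSpace (Option X) := ⊤
  letI mY : MeasurableSpace (Option Y) := ⊤
  haveI : MeasurableSingletonClass (Option X) :=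
    ⟨fun _ => MeasurableSpace.measurableSet_top⟩
  set C : Option X → Set (ℕ → Bool) := fun z =>
    z.elim (if (none : Option Y) ∈ B then univ else ∅) (fun x => f x ⁻¹' B) with hC
  have hCmeas : ∀ z, MeasurableSet (C z) := by
    rintro (_ | x)
    · by_cases h : (none : Option Y) ∈ B <;> simp [hC, h]
    · exact hf x MeasurableSpace.measurableSet_top
  have hmz : ∀ z : Option X, MeasurableSet (m ⁻¹' {z}) :=
    fun z => hm MeasurableSpace.measurableSet_top
  have hT : splitBind m f ⁻¹' B
      = SplitSeqAux.q ⁻¹' (⋃ z : Option X, (m ⁻¹' {z}) ×ˢ C z) := by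
    ext r
    simp only [mem_preimage, mem_iUnion, mem_prod, mem_singleton_iff, splitBind,
      SplitSeqAux.q]
    constructor
    · intro h
      refine ⟨m (fun n => r (2 * n)), rfl, ?_⟩
      cases hz : m (fun n => r (2 * n)) with
      | none => rw [hz] at h; simp only [Option.elim] at h; simp [hC, h]
      | some x => rw [hz] at h; simpa [hC] using h
    · rintro ⟨z, hz, hCz⟩
      rw [hz]
      cases z with
      | none =>
        simp only [hC, Option.elim] at hCz ⊢
        by_cases h : (none : Option Y) ∈ B
        · exact h
        · simp [h] at hCz
      | some x => simpa [hC] using hCz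
  have hdisj : Pairwise (Function.onFun Disjoint
      (fun z : Option X => (m ⁻¹' {z}) ×ˢ C z)) := by
    intro z z' hzz
    rw [Function.onFun, Set.disjoint_left]
    rintro ⟨p1, p2⟩ ⟨h1, _⟩ ⟨h2, _⟩
    exact hzz (h1.symm.trans h2)
  have hmeasT : ∀ z : Option X, MeasurableSet ((m ⁻¹' {z}) ×ˢ C z) :=
    fun z => (hmz z).prod (hCmeas z)
  rw [hT, ← Measure.map_apply SplitSeqAux.measurable_q (MeasurableSet.iUnion hmeasT),
    SplitSeqAux.map_q_eq_prod μ hcyl, measure_iUnion hdisj hmeasT]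
  have hrect : ∀ z : Option X, (μ.prod μ) ((m ⁻¹' {z}) ×ˢ C z) = μ (m ⁻¹' {z}) * μ (C z) :=
    fun z => Measure.prod_prod _ _
  rw [tsum_congr hrect]
  rw [lintegral_countable']
  refine tsum_congr fun z => ?_
  rw [Measure.map_apply hm (measurableSet_singleton z)]
  rw [mul_comm]
  congr 1
  cases z with
  | none =>
    simp only [hC, Option.elim]
    by_cases h : (none : Option Y) ∈ B <;> simp [h]
  | some x => rfl
end
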